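/- arXiv:math/0603633 — 4 statements merged into one kernel-verified Lean document; each statement's English description precedes it below -/
import Mathlib

section
/- The intersection of ℂ((z))((w)) and ℂ((w))((z)), as subspaces of the space ℂ[[z, z^{-1}, w, w^{-1}]] of formal distributions in two variables, equals ℂ[[z,w]][z^{-1}, w^{-1}]. -/
noncomputable section

namespace Stmt1

/-- The space `ℂ[[z, z^{-1}, w, w^{-1}]]` of formal distributions in two variables,
encoded by their coefficients: `a i j` is the coefficient of `z^i w^j`. -/
abbrev FormalDist : Type := ℤ → ℤ → ℂ

/-- The image of `ℂ((z))((w))` in `ℂ[[z, z^{-1}, w, w^{-1}]]`: Laurent series in `w`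
(coefficients vanish for `w`-exponent below some bound) whose coefficients are Laurent
series in `z` (for each fixed `w`-exponent the `z`-exponents are bounded below). -/
def Czw : Set FormalDist :=
  {a | (∃ M : ℤ, ∀ i j : ℤ, j < M → a i j = 0) ∧ ∀ j : ℤ, ∃ K : ℤ, ∀ i : ℤ, i < K → a i j = 0}

/-- The image of `ℂ((w))((z))` in `ℂ[[z, z^{-1}, w, w^{-1}]]`. -/
def Cwz : Set FormalDist :=
  {a | (∃ M : ℤ, ∀ i j : ℤ, i < M → a i j = 0) ∧ ∀ i : ℤ, ∃ K : ℤ, ∀ j : ℤ, j < K → a i j = 0}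

/-- The image of `ℂ[[z,w]][z^{-1}, w^{-1}]` in `ℂ[[z, z^{-1}, w, w^{-1}]]`:
distributions whose support is bounded below in both variables simultaneously. -/
def CzwPoly : Set FormalDist :=
  {a | ∃ k l : ℤ, ∀ i j : ℤ, (i < k ∨ j < l) → a i j = 0}

/-- The intersection of `ℂ((z))((w))` and `ℂ((w))((z))`, as subspaces of the space
`ℂ[[z, z^{-1}, w, w^{-1}]]` of formal distributions in two variables, equals
`ℂ[[z,w]][z^{-1}, w^{-1}]`. -/
theorem stmt1 : Czw ∩ Cwz = CzwPoly := by
  ext a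
  constructor
  · rintro ⟨⟨⟨M, hM⟩, _⟩, ⟨⟨M', hM'⟩, _⟩⟩
    exact ⟨M', M, fun i j h => h.elim (fun h => hM' i j h) (fun h => hM i j h)⟩
  · rintro ⟨k, l, h⟩
    exact ⟨⟨⟨l, fun i j hj => h i j (Or.inr hj)⟩,
            fun j => ⟨k, fun i hi => h i j (Or.inl hi)⟩⟩,
           ⟨⟨k, fun i j hi => h i j (Or.inl hi)⟩,
            fun i => ⟨l, fun j hj => h i j (Or.inr hj)⟩⟩⟩

end Stmt1
end
end

section
/- For commuting even λ, odd anticommuting χ^1,...,χ^N (commuting with λ), writing (Z-W)Λ = (z-w)λ + Σ_i(θ^i-ζ^i)χ^i and (Λ+∂_W)^{n|I} = (λ+∂_w)^n ∏_{i∈I}(χ^i + ∂_{ζ^i}), one has exp((Z-W)Λ) ∂_W^{n|I} δ(Z,W) = (Λ + ∂_W)^{n|I} δ(Z,W). -/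
/-!
Write `exp((Z-W)Λ) = e^{(z-w)λ} E` with `E = ∏ᵢ (1 + (θⁱ-ζⁱ)χⁱ)`, so that its `λ^k` coefficient is
`(z-w)^k E / k!`. The factor `E` is even, hence central, and `∂_{ζⁱ}(E x) = E ∂_{ζⁱ}x - χⁱ E x`;
so `χⁱ + ∂_{ζⁱ}` intertwines multiplication by `E` with `∂_{ζⁱ}`. Likewise
`[∂_w, (z-w)^{k+1}] = -(k+1)(z-w)^k` makes `λ + ∂_w` intertwine multiplication by `e^{(z-w)λ}`
with `∂_w`. Moving all derivatives out of the exponential leaves `exp((Z-W)Λ) δ(Z,W) = δ(Z,W)`,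
which holds because `(z-w)δ = 0` and `(θⁱ-ζⁱ)δ = 0`.
-/

noncomputable section

/-- The Grassmann algebra on `k` groups of `N` odd generators (e.g. `θ`'s, `ζ`'s, `χ`'s),
modelled as an exterior algebra. -/
abbrev Gr (k N : ℕ) : Type := ExteriorAlgebra ℂ (Fin k × Fin N → ℂ)

/-- The `i`-th odd generator of the `g`-th group. -/
def gv {k N : ℕ} (g : Fin k) (i : Fin N) : Gr k N :=
  ExteriorAlgebra.ι ℂ (Pi.single (g, i) (1:ℂ))

/-- The odd (left) derivative with respect to the `i`-th generator of group `g`,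
realized as contraction in the exterior algebra. -/
def dgv {k N : ℕ} (g : Fin k) (i : Fin N) : Module.End ℂ (Gr k N) :=
  CliffordAlgebra.contractLeft (LinearMap.proj (g, i))

/-- Iterated odd derivative extracting the coefficient of the full top monomial of
group `g` (applying `∂_1` first, then `∂_2`, etc.). -/
def resG {k N : ℕ} (g : Fin k) : Module.End ℂ (Gr k N) :=
  (((List.finRange N).map (dgv g)).reverse).prod

/-- The reordering sign `σ(I,J)` determined by `θ^I θ^J = σ(I,J) θ^{I∪J}` for disjoint
ordered subsets, and `0` otherwise. -/
def sgn {N : ℕ} (I J : Finset (Fin N)) : ℤ :=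
  if Disjoint I J then (-1)^(((I ×ˢ J).filter (fun p => p.2 < p.1)).card) else 0

/-- Ordered (increasing) product of the elements `f i`, `i ∈ J`. -/
def oprod {k N : ℕ} (J : Finset (Fin N)) (f : Fin N → Gr k N) : Gr k N :=
  ((J.sort (· ≤ ·)).map f).prod

namespace Stmt5

variable {N : ℕ}

-- We work in the Grassmann algebra on three groups of generators:
-- group 0 = θ's, group 1 = ζ's, group 2 = χ's.

/-- Formal distributions in `Z, W`. -/
abbrev Dist2 (N : ℕ) : Type := ℤ → ℤ → Gr 3 N

/-- Formal distributions in `Z, W` with polynomial dependence on the even parameter `λ`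
(the last index is the `λ`-degree); the odd parameters `χ^i` live in the Grassmann part. -/
abbrev Dist2L (N : ℕ) : Type := ℤ → ℤ → ℕ → Gr 3 N

/-- The formal super delta function. -/
def deltaDist (N : ℕ) : Dist2 N :=
  fun p q => if p + q = -1 then oprod Finset.univ (fun i => gv 0 i - gv 1 i) else 0

/-- `∂_W^{n|I} = ∂_w^n ∂_{ζ^{i_1}} ⋯ ∂_{ζ^{i_k}}`. -/
def dW (n : ℕ) (I : Finset (Fin N)) (d : Dist2 N) : Dist2 N :=
  fun p q => (∏ t ∈ Finset.range n, ((q : ℂ) + 1 + t)) •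
    (((I.sort (· ≤ ·)).map (dgv 1)).prod : Module.End ℂ (Gr 3 N)) (d p (q + n))

/-- The Grassmann factor `e^{Σ_i (θ^i - ζ^i)χ^i} = Π_i (1 + (θ^i - ζ^i)χ^i)`. -/
def expQ (N : ℕ) : Gr 3 N :=
  ((List.finRange N).map (fun i => 1 + (gv 0 i - gv 1 i) * gv 2 i)).prod

/-- Left multiplication of a distribution by
`exp((Z-W)Λ) = e^{(z-w)λ} e^{Σ(θ^i-ζ^i)χ^i}`, recording the `λ`-degree in the last index. -/
def expMul (d : Dist2 N) : Dist2L N :=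
  fun p q k => ∑ r ∈ Finset.range (k + 1),
    ((k.factorial : ℂ)⁻¹ * (-1 : ℂ)^(k - r) * (k.choose r)) •
      (expQ N * d (p - r) (q - ((k : ℤ) - r)))

/-- The operator `λ + ∂_w`. -/
def opLamW (F : Dist2L N) : Dist2L N :=
  fun p q k => (if k = 0 then 0 else F p q (k - 1)) + ((q : ℂ) + 1) • F p (q + 1) k

/-- The operator `χ^i + ∂_{ζ^i}`. -/
def opChiW (i : Fin N) (F : Dist2L N) : Dist2L N :=
  fun p q k => gv 2 i * F p q k + dgv 1 i (F p q k)

/-- A distribution in `Z, W` viewed as constant in `λ`. -/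
def toL (d : Dist2 N) : Dist2L N := fun p q k => if k = 0 then d p q else 0

end Stmt5

namespace ExteriorAlgebra

variable {R M : Type*} [CommRing R] [AddCommGroup M] [Module R M]

theorem ι_mul_ι_eq_neg (x y : M) : ι R x * ι R y = -(ι R y * ι R x) :=
  eq_neg_of_add_eq_zero_left (ι_add_mul_swap x y)

theorem commute_ι_mul_ι (a b : M) (x : ExteriorAlgebra R M) : Commute (ι R a * ι R b) x := by
  induction x using ExteriorAlgebra.induction with
  | algebraMap r => exact Algebra.commute_algebraMap_right r _
  | ι m =>
    show ι R a * ι R b * ι R m = ι R m * (ι R a * ι R b)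
    rw [mul_assoc, ι_mul_ι_eq_neg b m, mul_neg, ← mul_assoc, ι_mul_ι_eq_neg a m, neg_mul,
      neg_neg, mul_assoc]
  | mul u v hu hv => exact hu.mul_right hv
  | add u v hu hv => exact hu.add_right hv

theorem ι_mul_prod_map_ι_of_mem {v : M} {l : List M} (hv : v ∈ l) :
    ι R v * (l.map (ι R)).prod = 0 := by
  induction l with
  | nil => exact absurd hv List.not_mem_nil
  | cons w t ih =>
    rw [List.map_cons, List.prod_cons, ← mul_assoc]
    rcases List.mem_cons.mp hv with rfl | hv
    · rw [ι_sq_zero, zero_mul]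
    · rw [ι_mul_ι_eq_neg v w, neg_mul, mul_assoc, ih hv, mul_zero, neg_zero]

theorem ι_mul_one_add_ι_mul_ι_self (u c : M) : ι R c * (1 + ι R u * ι R c) = ι R c := by
  rw [mul_add, mul_one, ← mul_assoc, ι_mul_ι_eq_neg c u, neg_mul, mul_assoc, ι_sq_zero,
    mul_zero, neg_zero, add_zero]

theorem one_add_ι_mul_ι_mul_prod_map_ι {u : M} (c : M) {l : List M} (hu : u ∈ l) :
    (1 + ι R u * ι R c) * (l.map (ι R)).prod = (l.map (ι R)).prod := by
  rw [add_mul, one_mul, ι_mul_ι_eq_neg u c, neg_mul, mul_assoc, ι_mul_prod_map_ι_of_mem hu,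
    mul_zero, neg_zero, add_zero]

theorem contractLeft_ι_mul_ι_mul (f : Module.Dual R M) (u c : M) (x : ExteriorAlgebra R M) :
    CliffordAlgebra.contractLeft f (ι R u * ι R c * x)
      = f u • (ι R c * x) - f c • (ι R u * x)
        + ι R u * ι R c * CliffordAlgebra.contractLeft f x := by
  rw [mul_assoc, ι, CliffordAlgebra.contractLeft_ι_mul, CliffordAlgebra.contractLeft_ι_mul,
    mul_sub, mul_smul_comm, ← mul_assoc]
  abel

end ExteriorAlgebra

theorem pow_succ_mul_of_mul_eq_mul_add_one {A : Type*} [Ring A] {x a : A}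
    (h : x * a = a * x + 1) (n : ℕ) :
    x ^ (n + 1) * a = a * x ^ (n + 1) + ((n + 1 : ℕ) : A) * x ^ n := by
  induction n with
  | zero => simpa using h
  | succ n ih =>
    push_cast at ih ⊢
    have hx : x * ((n : A) + 1) = ((n : A) + 1) * x := by
      rw [mul_add, add_mul, (Nat.cast_commute n x).eq, mul_one, one_mul]
    rw [pow_succ' x (n + 1), mul_assoc, ih, mul_add, ← mul_assoc, h, ← mul_assoc x, hx, mul_assoc,
      ← pow_succ', add_mul, one_mul, mul_assoc]
    simp only [add_mul, one_mul]
    abel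

section FormalDistribution

variable {V : Type*} [AddCommGroup V] [Module ℂ V]

/- A formal distribution `d : ℤ → ℤ → V` stands for `∑ d p q z^p w^q`. -/

def mulZ : Module.End ℂ (ℤ → ℤ → V) where
  toFun d p q := d (p - 1) q
  map_add' _ _ := rfl
  map_smul' _ _ := rfl

def mulW : Module.End ℂ (ℤ → ℤ → V) where
  toFun d p q := d p (q - 1)
  map_add' _ _ := rfl
  map_smul' _ _ := rfl

def derivW : Module.End ℂ (ℤ → ℤ → V) where
  toFun d p q := ((q : ℂ) + 1) • d p (q + 1)
  map_add' _ _ := by funext p q; exact smul_add _ _ _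
  map_smul' c _ := by funext p q; exact smul_comm _ c _

@[simp] theorem mulZ_apply (d : ℤ → ℤ → V) (p q : ℤ) : mulZ d p q = d (p - 1) q := rfl

@[simp] theorem mulW_apply (d : ℤ → ℤ → V) (p q : ℤ) : mulW d p q = d p (q - 1) := rfl

@[simp] theorem derivW_apply (d : ℤ → ℤ → V) (p q : ℤ) :
    derivW d p q = ((q : ℂ) + 1) • d p (q + 1) := rfl

theorem mulZ_pow_apply (r : ℕ) (d : ℤ → ℤ → V) (p q : ℤ) : (mulZ ^ r) d p q = d (p - r) q := by
  induction r generalizing p with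
  | zero => simp
  | succ r ih =>
    rw [pow_succ', Module.End.mul_apply, mulZ_apply, ih]
    push_cast; ring_nf

theorem neg_mulW_pow_apply (r : ℕ) (d : ℤ → ℤ → V) (p q : ℤ) :
    ((-mulW) ^ r) d p q = (-1 : ℂ) ^ r • d p (q - r) := by
  induction r generalizing q with
  | zero => simp
  | succ r ih =>
    rw [pow_succ', Module.End.mul_apply, LinearMap.neg_apply, Pi.neg_apply, Pi.neg_apply,
      mulW_apply, ih, pow_succ', mul_smul, neg_one_smul]
    push_cast; ring_nf

theorem commute_mulZ_neg_mulW : Commute (mulZ : Module.End ℂ (ℤ → ℤ → V)) (-mulW) :=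
  (show Commute (mulZ : Module.End ℂ (ℤ → ℤ → V)) mulW from LinearMap.ext fun _ => rfl).neg_right

def mulZSubW : Module.End ℂ (ℤ → ℤ → V) := mulZ - mulW

theorem mulZSubW_pow_apply (k : ℕ) (d : ℤ → ℤ → V) (p q : ℤ) :
    (mulZSubW ^ k) d p q
      = ∑ r ∈ Finset.range (k + 1),
          ((-1 : ℂ) ^ (k - r) * k.choose r) • d (p - r) (q - (k - r)) := by
  rw [mulZSubW, sub_eq_add_neg, commute_mulZ_neg_mulW.add_pow]
  simp only [LinearMap.coe_sum, Finset.sum_apply, Module.End.mul_apply,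
    Module.End.natCast_apply, mulZ_pow_apply, neg_mulW_pow_apply, Pi.smul_apply]
  refine Finset.sum_congr rfl fun r hr => ?_
  rw [Nat.cast_sub (Nat.lt_succ_iff.mp (Finset.mem_range.mp hr)), ← Nat.cast_smul_eq_nsmul ℂ,
    smul_smul]

theorem mulZSubW_mul_derivW :
    mulZSubW * derivW = derivW * mulZSubW + (1 : Module.End ℂ (ℤ → ℤ → V)) := by
  ext d p q
  rw [mulZSubW]
  simp only [LinearMap.add_apply, LinearMap.sub_apply, Module.End.mul_apply, Module.End.one_apply,
    Pi.add_apply, Pi.sub_apply, derivW_apply, mulZ_apply, mulW_apply, sub_add_cancel,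
    add_sub_cancel_right, smul_sub]
  push_cast
  module

end FormalDistribution

namespace Stmt5

open ExteriorAlgebra

variable {N : ℕ}

def thetaSubZeta (i : Fin N) : Fin 3 × Fin N → ℂ := Pi.single (0, i) 1 - Pi.single (1, i) 1

def expFactor (i : Fin N) : Gr 3 N := 1 + (gv 0 i - gv 1 i) * gv 2 i

theorem gv_zero_sub_gv_one (i : Fin N) : gv 0 i - gv 1 i = ι ℂ (thetaSubZeta i) :=
  (map_sub _ _ _).symm

theorem expFactor_eq (i : Fin N) :
    expFactor i = 1 + ι ℂ (thetaSubZeta i) * ι ℂ (Pi.single (2, i) 1) := by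
  rw [expFactor, gv_zero_sub_gv_one, gv]

theorem expQ_eq_prod_expFactor : expQ N = ((List.finRange N).map expFactor).prod := rfl

theorem commute_expFactor (j : Fin N) (x : Gr 3 N) : Commute (expFactor j) x := by
  rw [expFactor_eq]
  exact (Commute.one_left x).add_left (commute_ι_mul_ι _ _ x)

theorem gv_two_mul_expFactor_self (i : Fin N) : gv 2 i * expFactor i = gv 2 i := by
  rw [expFactor_eq, gv, ι_mul_one_add_ι_mul_ι_self]

theorem dgv_one_expFactor_mul (i j : Fin N) (x : Gr 3 N) :
    dgv 1 i (expFactor j * x) = expFactor j * dgv 1 i x - if j = i then gv 2 i * x else 0 := by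
  have hθ : LinearMap.proj (R := ℂ) ((1 : Fin 3), i) (thetaSubZeta j)
      = if j = i then -1 else 0 := by
    by_cases h : j = i
    · simp [thetaSubZeta, h]
    · simp [thetaSubZeta, h, Ne.symm h]
  have hχ : LinearMap.proj (R := ℂ) ((1 : Fin 3), i)
      (Pi.single ((2 : Fin 3), j) 1 : Fin 3 × Fin N → ℂ) = 0 := by
    simp
  rw [expFactor_eq, add_mul, one_mul, map_add, dgv, contractLeft_ι_mul_ι_mul, hθ, hχ, zero_smul,
    sub_zero, add_mul, one_mul, gv]
  split_ifs with h
  · subst h; rw [neg_one_smul]; abel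
  · rw [zero_smul, zero_add, sub_zero]

theorem dgv_one_prod_expFactor_mul (i : Fin N) {l : List (Fin N)} (hl : l.Nodup) (x : Gr 3 N) :
    dgv 1 i ((l.map expFactor).prod * x)
      = (l.map expFactor).prod * dgv 1 i x
        - if i ∈ l then gv 2 i * ((l.map expFactor).prod * x) else 0 := by
  induction l with
  | nil => simp
  | cons j t ih =>
    obtain ⟨hjt, ht⟩ := List.nodup_cons.mp hl
    rw [List.map_cons, List.prod_cons, mul_assoc, dgv_one_expFactor_mul, ih ht, mul_sub,
      ← mul_assoc (expFactor j) _ (dgv 1 i x)]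
    by_cases hji : j = i
    · subst hji
      rw [if_pos rfl, if_neg hjt, if_pos List.mem_cons_self, mul_zero, sub_zero,
        ← mul_assoc (gv 2 j) (expFactor j), gv_two_mul_expFactor_self]
    · simp only [List.mem_cons, Ne.symm hji, false_or, if_neg hji, sub_zero]
      split_ifs
      · rw [← mul_assoc (expFactor j) (gv 2 i), (commute_expFactor j (gv 2 i)).eq,
          mul_assoc (gv 2 i)]
      · rw [mul_zero]

theorem gv_two_mul_add_dgv_one_expQ_mul (i : Fin N) (x : Gr 3 N) :
    gv 2 i * (expQ N * x) + dgv 1 i (expQ N * x) = expQ N * dgv 1 i x := by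
  rw [expQ_eq_prod_expFactor, dgv_one_prod_expFactor_mul i (List.nodup_finRange N),
    if_pos (List.mem_finRange i), add_sub_cancel]

theorem expQ_mul_oprod :
    expQ N * oprod Finset.univ (fun i => gv 0 i - gv 1 i)
      = oprod Finset.univ (fun i => gv 0 i - gv 1 i) := by
  set l := (Finset.univ.sort (· ≤ ·)).map (thetaSubZeta (N := N))
  have hcore : oprod Finset.univ (fun i => gv 0 i - gv 1 i) = (l.map (ι ℂ)).prod := by
    simp only [oprod, l, List.map_map, Function.comp_def, gv_zero_sub_gv_one]
  rw [hcore, expQ_eq_prod_expFactor, ← smul_eq_mul, ← MulAction.mem_stabilizerSubmonoid_iff]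
  refine Submonoid.list_prod_mem _ fun e he => ?_
  obtain ⟨j, -, rfl⟩ := List.mem_map.mp he
  rw [MulAction.mem_stabilizerSubmonoid_iff, smul_eq_mul, expFactor_eq]
  exact one_add_ι_mul_ι_mul_prod_map_ι _
    (List.mem_map_of_mem ((Finset.mem_sort _).mpr (Finset.mem_univ j)))

theorem expMul_apply (d : Dist2 N) (p q : ℤ) (k : ℕ) :
    expMul d p q k = (k.factorial : ℂ)⁻¹ • (expQ N * (mulZSubW ^ k) d p q) := by
  simp only [expMul, mulZSubW_pow_apply, Finset.mul_sum, Finset.smul_sum, mul_smul_comm,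
    smul_smul, mul_assoc]

theorem mulZSubW_deltaDist : mulZSubW (deltaDist N) = 0 := by
  funext p q
  simp only [mulZSubW, LinearMap.sub_apply, Pi.sub_apply, mulZ_apply, mulW_apply, deltaDist,
    show p - 1 + q = p + (q - 1) by ring, sub_self, Pi.zero_apply]

theorem expMul_deltaDist : expMul (deltaDist N) = toL (deltaDist N) := by
  funext p q k
  rw [expMul_apply, toL]
  cases k with
  | zero =>
    rw [pow_zero, Module.End.one_apply, Nat.factorial_zero, Nat.cast_one, inv_one, one_smul,
      if_pos rfl, deltaDist]
    split_ifs
    · exact expQ_mul_oprod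
    · exact mul_zero _
  | succ k =>
    rw [pow_succ, Module.End.mul_apply, mulZSubW_deltaDist, map_zero, Pi.zero_apply,
      Pi.zero_apply, mul_zero, smul_zero, if_neg k.succ_ne_zero]

theorem expMul_derivW (d : Dist2 N) : expMul (derivW d) = opLamW (expMul d) := by
  funext p q k
  simp only [opLamW, expMul_apply]
  cases k with
  | zero => simp
  | succ k =>
    rw [if_neg k.succ_ne_zero, Nat.add_sub_cancel, ← Module.End.mul_apply,
      pow_succ_mul_of_mul_eq_mul_add_one mulZSubW_mul_derivW, LinearMap.add_apply,
      Module.End.mul_apply, Module.End.mul_apply, Module.End.natCast_apply,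
      ← Nat.cast_smul_eq_nsmul ℂ]
    simp only [Pi.add_apply, Pi.smul_apply, derivW_apply, mul_add, mul_smul_comm, smul_add,
      smul_smul]
    rw [add_comm]
    congr 2
    · rw [Nat.factorial_succ]
      push_cast
      field_simp
    · ring

theorem expMul_map_dgv_one (i : Fin N) (d : Dist2 N) :
    expMul (fun p q => dgv 1 i (d p q)) = opChiW i (expMul d) := by
  funext p q k
  simp only [expMul, opChiW, Finset.mul_sum, map_sum, ← Finset.sum_add_distrib]
  refine Finset.sum_congr rfl fun r _ => ?_
  rw [mul_smul_comm, map_smul, ← smul_add, gv_two_mul_add_dgv_one_expQ_mul]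

theorem expMul_map_prod_dgv_one (d : Dist2 N) (s : List (Fin N)) :
    expMul (fun p q => ((s.map (dgv 1)).prod : Module.End ℂ (Gr 3 N)) (d p q))
      = s.foldr opChiW (expMul d) := by
  induction s with
  | nil => rfl
  | cons j t ih =>
    rw [List.foldr_cons, ← ih, ← expMul_map_dgv_one]
    rfl

theorem dW_zero (I : Finset (Fin N)) (d : Dist2 N) :
    dW 0 I d = fun p q => ((I.sort (· ≤ ·)).map (dgv 1)).prod (d p q) := by
  funext p q
  simp [dW]

theorem dW_succ (n : ℕ) (I : Finset (Fin N)) (d : Dist2 N) :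
    dW (n + 1) I d = derivW (dW n I d) := by
  funext p q
  rw [derivW_apply, dW, dW, smul_smul, Finset.prod_range_succ', mul_comm]
  congr 2
  · norm_num
  · exact Finset.prod_congr rfl fun t _ => by push_cast; ring
  · push_cast; ring_nf

/-- For even `λ` and odd anticommuting `χ^1, ..., χ^N` (commuting with `λ`), writing
`(Z-W)Λ = (z-w)λ + Σ_i (θ^i-ζ^i)χ^i` and `(Λ+∂_W)^{n|I} = (λ+∂_w)^n Π_{i∈I}(χ^i+∂_{ζ^i})`,
one has `exp((Z-W)Λ) ∂_W^{n|I} δ(Z,W) = (Λ+∂_W)^{n|I} δ(Z,W)`. -/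
theorem stmt5 (N : ℕ) (n : ℕ) (I : Finset (Fin N)) :
    expMul (dW n I (deltaDist N))
      = opLamW^[n] ((I.sort (· ≤ ·)).foldr opChiW (toL (deltaDist N))) := by
  induction n with
  | zero => rw [Function.iterate_zero, id_eq, dW_zero, expMul_map_prod_dgv_one, expMul_deltaDist]
  | succ n ih => rw [dW_succ, expMul_derivW, ih, Function.iterate_succ_apply']

end Stmt5
end
end

section
/- In an N_W=N SUSY vertex algebra, the normally ordered product satisfies quasi-commutativity: :ab: - (-1)^{p(a)p(b)} :ba: = ∫_{-∇}^0 [a_Λ b] dΛ, where the integral is the definite integral of the Λ-bracket (integrating the even variable λ and applying ∂ with respect to all odd variables χ^i) evaluated between -∇ and 0. -/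
noncomputable section

/-- An `N_W = N` SUSY vertex algebra: a vector superspace `V` (with ℤ/2-grading `grade`)
with an even vacuum `vac`, an even translation operator `T`, odd pairwise anticommuting
translation operators `S i` commuting with `T`, and a state-(super)field correspondence
`Y`, where `Y a j J` is the coefficient `a_{(j|J)}` of `Z^{-1-j|N∖J}` in `Y(a,Z)`
(of parity `p(a) + N - |J|`), subject to the vacuum, translation invariance
and locality axioms. -/
structure NWVertex (N : ℕ) (V : Type) [AddCommGroup V] [Module ℂ V] where
  grade : ZMod 2 → Submodule ℂ V
  isInternal : DirectSum.IsInternal grade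
  vac : V
  vac_even : vac ∈ grade 0
  T : Module.End ℂ V
  S : Fin N → Module.End ℂ V
  TS_comm : ∀ i, T * S i = S i * T
  SS_anticomm : ∀ i j, S i * S j + S j * S i = 0
  Y : V →ₗ[ℂ] ℤ → Finset (Fin N) → V →ₗ[ℂ] V
  -- each `Y(a,Z)` is a field
  field_cond : ∀ (a b : V) (J : Finset (Fin N)), ∃ n0 : ℤ, ∀ j : ℤ, n0 ≤ j → Y a j J b = 0
  -- vacuum axioms
  vac_id : ∀ a : V, Y a (-1) Finset.univ vac = a
  vac_pos : ∀ (a : V) (j : ℤ) (J : Finset (Fin N)), 0 ≤ j → Y a j J vac = 0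
  T_vac : T vac = 0
  S_vac : ∀ i, S i vac = 0
  -- `Y` is parity preserving: `a_{(j|J)}` has parity `p(a) + N - |J|`
  Y_parity : ∀ (pa pb : ℕ) (a b : V) (j : ℤ) (J : Finset (Fin N)),
    a ∈ grade pa → b ∈ grade pb → Y a j J b ∈ grade (pa + pb + N + J.card)
  -- translation invariance: `[T, a_{(j|J)}] = -j a_{(j-1|J)}`
  transT : ∀ (a : V) (j : ℤ) (J : Finset (Fin N)) (b : V),
    T (Y a j J b) - Y a j J (T b) = (-j : ℤ) • Y a (j - 1) J b
  -- translation invariance: `[S^i, a_{(j|J)}] = σ(N∖J, e_i) a_{(j|J∖e_i)}` if `i ∈ J`, else `0`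
  transS : ∀ (pa : ℕ) (a : V), a ∈ grade pa → ∀ (i : Fin N) (j : ℤ) (J : Finset (Fin N)) (b : V),
    S i (Y a j J b) - ((-1 : ℤ)^(pa + N + J.card)) • Y a j J (S i b)
      = if i ∈ J then (sgn Jᶜ {i} : ℤ) • Y a j (J.erase i) b else 0
  -- locality: `(z-w)^n [Y(a,Z), Y(b,W)] = 0` for some `n`
  locality : ∀ (pa pb : ℕ) (a b : V), a ∈ grade pa → b ∈ grade pb → ∃ n : ℕ,
    ∀ (j j' : ℤ) (J J' : Finset (Fin N)) (c : V),
      (∑ r ∈ Finset.range (n + 1), ((-1 : ℤ)^r * (n.choose r : ℤ)) •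
        (Y a (j + ((n : ℤ) - r)) J (Y b (j' + r) J' c)
          - ((-1 : ℤ)^((pa + N + J.card) * (pb + N + J'.card))) •
            Y b (j' + r) J' (Y a (j + ((n : ℤ) - r)) J c))) = 0


/-! Apply locality of `b` and `a`, of an order `n` so large that `a_{(j)} b = 0` for `j ≥ n`, to
the vacuum with indices `(-1 - n, -1)`. As `a_{(j)} |0⟩ = 0` for `j ≥ 0` and
`b_{(-1-k)} |0⟩ = T^k b / k!`, only `:ba:` and the terms `a_{(k)} T^{k+1} b` survive:
`:ab: - ±:ba: = Σ_{k<n} (-1)^k C(n, k+1) a_{(k)} T^{k+1} b / (k+1)!`.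
Translation covariance `[a_{(k)}, T] = k a_{(k-1)}` rewrites `a_{(k)} T^{k+1} b / (k+1)!` as
`Σ_{j≤k} C(k, j) T^{j+1} a_{(j)} b / (j+1)!`, and the alternating sum
`Σ_k (-1)^k C(n, k+1) C(k, j) = (-1)^j` collapses the double sum to the claimed one. -/

section

open Finset Polynomial

variable {A : Type*} [Ring A]

namespace IntIndexed

def mulLeft (t : A) : Module.End ℤ (ℤ → A) where
  toFun F j := t * F j
  map_add' F G := by ext j; exact mul_add t (F j) (G j)
  map_smul' n F := by ext j; exact mul_smul_comm n t (F j)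

def mulRight (t : A) : Module.End ℤ (ℤ → A) where
  toFun F j := F j * t
  map_add' F G := by ext j; exact add_mul (F j) (G j) t
  map_smul' n F := by ext j; exact smul_mul_assoc n (F j) t

variable (A) in
def lower : Module.End ℤ (ℤ → A) where
  toFun F j := j • F (j - 1)
  map_add' F G := by ext j; exact smul_add j (F (j - 1)) (G (j - 1))
  map_smul' n F := by ext j; exact smul_comm j n (F (j - 1))

@[simp] lemma mulLeft_apply (t : A) (F : ℤ → A) (j : ℤ) : mulLeft t F j = t * F j := rfl

@[simp] lemma mulRight_apply (t : A) (F : ℤ → A) (j : ℤ) : mulRight t F j = F j * t := rfl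

@[simp] lemma lower_apply (F : ℤ → A) (j : ℤ) : lower A F j = j • F (j - 1) := rfl

lemma mulLeft_pow_apply (t : A) (s : ℕ) (F : ℤ → A) (j : ℤ) :
    (mulLeft t ^ s) F j = t ^ s * F j := by
  induction s with
  | zero => rw [pow_zero, pow_zero, one_mul]; rfl
  | succ s ih => rw [pow_succ', Module.End.mul_apply, mulLeft_apply, ih, pow_succ', mul_assoc]

lemma mulRight_pow_apply (t : A) (m : ℕ) (F : ℤ → A) (j : ℤ) :
    (mulRight t ^ m) F j = F j * t ^ m := by
  induction m with
  | zero => rw [pow_zero, pow_zero, mul_one]; rfl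
  | succ m ih => rw [pow_succ', Module.End.mul_apply, mulRight_apply, ih, pow_succ, mul_assoc]

lemma lower_pow_apply (s : ℕ) (F : ℤ → A) (j : ℤ) :
    (lower A ^ s) F j = (descPochhammer ℤ s).eval j • F (j - s) := by
  induction s generalizing j with
  | zero => simp
  | succ s ih =>
    rw [pow_succ', Module.End.mul_apply, lower_apply, ih, smul_smul, descPochhammer_succ_left]
    simp only [eval_mul, eval_X, eval_comp, eval_sub, eval_one, Nat.cast_succ, sub_sub, add_comm]

lemma commute_mulRight_mulLeft (t u : A) : Commute (mulRight t) (mulLeft u) := by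
  ext F j; exact mul_assoc u (F j) t

lemma commute_mulRight_lower (t : A) : Commute (mulRight t) (lower A) := by
  ext F j; exact smul_mul_assoc j (F (j - 1)) t

lemma commute_mulLeft_lower (t : A) : Commute (mulLeft t) (lower A) := by
  ext F j; exact mul_smul_comm j t (F (j - 1))

end IntIndexed

open IntIndexed in
/- Right multiplication by `t` acts on `G` as `mulLeft t + lower A`; the three operators commute,
so the same holds for powers, which `Commute.add_pow` expands. -/
theorem mul_pow_eq_sum_descPochhammer_of_mul_eq (t : A) (G : ℤ → A)
    (hG : ∀ j, G j * t = t * G j + j • G (j - 1)) (m : ℕ) (j : ℤ) :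
    G j * t ^ m = ∑ s ∈ range (m + 1),
      ((m.choose s : ℤ) * (descPochhammer ℤ (m - s)).eval j) •
        (t ^ s * G (j - (m - s : ℕ))) := by
  have hR : mulRight t G = (mulLeft t + lower A) G := funext hG
  have hRm : (mulRight t ^ m) G = ((mulLeft t + lower A) ^ m) G := by
    induction m with
    | zero => rfl
    | succ m ih =>
      rw [pow_succ, Module.End.mul_apply, hR, ← Module.End.mul_apply,
        ((commute_mulRight_mulLeft t t).add_right (commute_mulRight_lower t)).pow_left m |>.eq,
        Module.End.mul_apply, ih, ← Module.End.mul_apply, ← pow_succ']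
  rw [← mulRight_pow_apply, hRm, (commute_mulLeft_lower t).add_pow, LinearMap.sum_apply,
    Finset.sum_apply]
  refine sum_congr rfl fun s _ => ?_
  rw [Module.End.mul_apply, Module.End.mul_apply, Module.End.natCast_apply, mulLeft_pow_apply,
    map_nsmul, Pi.smul_apply, lower_pow_apply, mul_smul, natCast_zsmul]
  simp only [mul_smul_comm]

end

section

open Finset

/- Coefficient form of `(z - w)^(n+1) = z (z - w)^n - w (z - w)^n`. -/
theorem sum_neg_one_pow_mul_choose_smul_succ {M : Type*} [AddCommGroup M] (X : ℤ → ℤ → M)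
    (n : ℕ) (j j' : ℤ) :
    ∑ r ∈ range (n + 1 + 1), ((-1 : ℤ) ^ r * ((n + 1).choose r : ℤ)) •
        X (j + (((n + 1 : ℕ) : ℤ) - r)) (j' + r)
      = ∑ r ∈ range (n + 1), ((-1 : ℤ) ^ r * (n.choose r : ℤ)) •
            X ((j + 1) + ((n : ℤ) - r)) (j' + r)
        - ∑ r ∈ range (n + 1), ((-1 : ℤ) ^ r * (n.choose r : ℤ)) •
            X (j + ((n : ℤ) - r)) ((j' + 1) + r) := by
  let f : ℕ → ℕ → M := fun r p => ((-1 : ℤ) ^ r) • X (j + p) (j' + r)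
  calc _ = ∑ r ∈ range (n + 2), (n + 1).choose r • f r (n + 1 - r) := by
        refine sum_congr rfl fun r hr => ?_
        have hr : r ≤ n + 1 := Nat.lt_succ_iff.1 (mem_range.1 hr)
        simp only [f, Nat.cast_sub hr, mul_comm ((-1 : ℤ) ^ r), mul_smul, natCast_zsmul]
    _ = _ := sum_choose_succ_nsmul f n
    _ = _ := by
        rw [sub_eq_add_neg, ← sum_neg_distrib]
        congr 1 <;> refine sum_congr rfl fun r hr => ?_
        · have hr : r ≤ n := Nat.lt_succ_iff.1 (mem_range.1 hr)
          simp only [f, Nat.cast_sub (Nat.le_succ_of_le hr), mul_comm ((-1 : ℤ) ^ r), mul_smul,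
            natCast_zsmul]
          congr 3; push_cast; ring
        · have hr : r ≤ n := Nat.lt_succ_iff.1 (mem_range.1 hr)
          have e : j' + ((r + 1 : ℕ) : ℤ) = j' + 1 + r := by push_cast; ring
          simp only [f, Nat.cast_sub hr, e, pow_succ, one_smul, neg_smul, mul_comm ((-1 : ℤ) ^ r),
            mul_smul, natCast_zsmul, smul_neg]

theorem Int.alternating_sum_range_choose_mul_choose (n j : ℕ) :
    ∑ k ∈ Finset.range (n + 1), (-1 : ℤ) ^ k * n.choose k * k.choose j
      = if n = j then (-1) ^ j else 0 := by
  rcases lt_or_ge n j with hnj | hjn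
  · rw [if_neg hnj.ne]
    refine sum_eq_zero fun k hk => ?_
    rw [Nat.choose_eq_zero_of_lt (by grind : k < j), Nat.cast_zero, mul_zero]
  obtain ⟨d, rfl⟩ := Nat.exists_eq_add_of_le hjn
  have hlow : ∀ k ∈ Finset.range j, (-1 : ℤ) ^ k * (j + d).choose k * k.choose j = 0 :=
    fun k hk => by rw [Nat.choose_eq_zero_of_lt (Finset.mem_range.1 hk), Nat.cast_zero, mul_zero]
  have hhigh : ∀ i ∈ Finset.range (d + 1),
      (-1 : ℤ) ^ (j + i) * (j + d).choose (j + i) * (j + i).choose j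
        = ((-1) ^ j * (j + d).choose j) * ((-1) ^ i * d.choose i) := by
    intro i _
    rw [mul_assoc, ← Nat.cast_mul, Nat.choose_mul (by grind), Nat.add_sub_cancel_left,
      Nat.add_sub_cancel_left, pow_add]
    push_cast; ring
  rw [show j + d + 1 = j + (d + 1) by ring, sum_range_add, sum_eq_zero hlow, zero_add,
    sum_congr rfl hhigh, ← mul_sum, Int.alternating_sum_range_choose]
  by_cases hd : d = 0 <;> simp [hd]

theorem Int.alternating_sum_range_choose_succ_mul_choose {n j : ℕ} (hj : j < n) :
    ∑ k ∈ Finset.range n, (-1 : ℤ) ^ k * n.choose (k + 1) * k.choose j = (-1) ^ j := by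
  induction n with
  | zero => omega
  | succ n ih =>
    have hpascal :
        ∑ k ∈ Finset.range (n + 1), (-1 : ℤ) ^ k * (n + 1).choose (k + 1) * k.choose j
          = ∑ k ∈ Finset.range (n + 1), (-1 : ℤ) ^ k * n.choose (k + 1) * k.choose j
            + ∑ k ∈ Finset.range (n + 1), (-1 : ℤ) ^ k * n.choose k * k.choose j := by
      rw [← sum_add_distrib]
      refine sum_congr rfl fun k _ => ?_
      rw [Nat.choose_succ_succ']; push_cast; ring
    rw [hpascal, Int.alternating_sum_range_choose_mul_choose, sum_range_succ,
      Nat.choose_succ_self, Nat.cast_zero, mul_zero, zero_mul, add_zero]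
    rcases Nat.lt_succ_iff_lt_or_eq.1 hj with hj | rfl
    · rw [ih hj, if_neg hj.ne', add_zero]
    · rw [if_pos rfl, sum_eq_zero fun k hk => by
        rw [Nat.choose_eq_zero_of_lt (Finset.mem_range.1 hk), Nat.cast_zero, mul_zero], zero_add]

theorem factorial_inv_mul_choose_mul_descFactorial {K : Type*} [Field K] [CharZero K]
    {k i : ℕ} (hi : i ≤ k) :
    ((k + 1).factorial : K)⁻¹ * ((k + 1).choose (i + 1) * k.descFactorial (k - i) : ℕ)
      = k.choose i * ((i + 1).factorial : K)⁻¹ := by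
  have hdesc : (k.descFactorial (k - i) : K) * i.factorial = k.factorial := by
    rw [← Nat.cast_mul, mul_comm, ← Nat.factorial_mul_descFactorial (Nat.sub_le k i),
      Nat.sub_sub_self hi]
  rw [Nat.cast_mul, Nat.cast_choose K (Nat.add_le_add_right hi 1), Nat.cast_choose K hi,
    Nat.add_sub_add_right, ← hdesc]
  have := Nat.cast_ne_zero (R := K) |>.2 (k + 1).factorial_ne_zero
  have := Nat.cast_ne_zero (R := K) |>.2 i.factorial_ne_zero
  field_simp

end

namespace NWVertex

open Finset

variable {N : ℕ} {V : Type} [AddCommGroup V] [Module ℂ V] (W : NWVertex N V)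

lemma Y_mul_T (a : V) (j : ℤ) (J : Finset (Fin N)) :
    W.Y a j J * W.T = W.T * W.Y a j J + j • W.Y a (j - 1) J := by
  ext c
  have h := W.transT a j J c
  simp only [Module.End.mul_apply, LinearMap.add_apply, LinearMap.smul_apply]
  rw [neg_smul] at h
  linear_combination (norm := module) -h

lemma Y_T_pow_apply (a : V) (j : ℤ) (J : Finset (Fin N)) (m : ℕ) (c : V) :
    W.Y a j J ((W.T ^ m) c) = ∑ s ∈ range (m + 1),
      ((m.choose s : ℤ) * (descPochhammer ℤ (m - s)).eval j) •
        (W.T ^ s) (W.Y a (j - (m - s : ℕ)) J c) := by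
  rw [← Module.End.mul_apply,
    mul_pow_eq_sum_descPochhammer_of_mul_eq W.T (fun j => W.Y a j J) (W.Y_mul_T a · J),
    LinearMap.sum_apply]
  rfl

lemma Y_factorial_inv_smul_T_pow_succ (a : V) (J : Finset (Fin N)) (k : ℕ) (c : V) :
    W.Y a k J (((k + 1).factorial : ℂ)⁻¹ • (W.T ^ (k + 1)) c) = ∑ i ∈ range (k + 1),
      ((k.choose i : ℂ) * ((i + 1).factorial : ℂ)⁻¹) • (W.T ^ (i + 1)) (W.Y a i J c) := by
  rw [map_smul, Y_T_pow_apply, sum_range_succ', Nat.sub_zero,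
    descPochhammer_eval_eq_descFactorial, Nat.descFactorial_of_lt (Nat.lt_succ_self k),
    Nat.cast_zero, mul_zero, zero_smul, add_zero, smul_sum]
  refine sum_congr rfl fun i hi => ?_
  have hik : i ≤ k := Nat.lt_succ_iff.1 (mem_range.1 hi)
  rw [Nat.add_sub_add_right, show (k : ℤ) - (k - i : ℕ) = i by push_cast [hik]; ring,
    descPochhammer_eval_eq_descFactorial, ← Int.cast_smul_eq_zsmul ℂ, smul_smul]
  push_cast
  rw [← factorial_inv_mul_choose_mul_descFactorial hik]
  push_cast
  ring_nf

lemma alternating_sum_choose_succ_smul_Y_T_pow_succ (a b : V) (J : Finset (Fin N)) (n : ℕ) :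
    ∑ k ∈ range n, ((-1 : ℤ)^k * (n.choose (k + 1) : ℤ)) •
        W.Y a k J (((k + 1).factorial : ℂ)⁻¹ • (W.T ^ (k + 1)) b)
      = ∑ j ∈ range n, ((-1 : ℂ)^j * ((j + 1).factorial : ℂ)⁻¹) •
          (W.T ^ (j + 1)) (W.Y a j J b) := by
  have hexpand : ∀ k ∈ range n,
      W.Y a k J (((k + 1).factorial : ℂ)⁻¹ • (W.T ^ (k + 1)) b)
        = ∑ j ∈ range n, ((k.choose j : ℂ) * ((j + 1).factorial : ℂ)⁻¹) •
            (W.T ^ (j + 1)) (W.Y a j J b) := by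
    intro k hk
    rw [W.Y_factorial_inv_smul_T_pow_succ]
    refine sum_subset (range_subset_range.2 (mem_range.1 hk)) fun j _ hj => ?_
    rw [Nat.choose_eq_zero_of_lt (by simpa using hj), Nat.cast_zero, zero_mul, zero_smul]
  rw [sum_congr rfl fun k hk => congrArg _ (hexpand k hk)]
  simp only [smul_sum]
  rw [sum_comm]
  refine sum_congr rfl fun j hj => ?_
  have hcomb := congrArg (Int.cast : ℤ → ℂ)
    (Int.alternating_sum_range_choose_succ_mul_choose (mem_range.1 hj))
  push_cast at hcomb
  simp only [← Int.cast_smul_eq_zsmul ℂ, smul_smul, ← sum_smul]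
  rw [← hcomb, sum_mul]
  congr 1
  refine sum_congr rfl fun k _ => ?_
  push_cast
  ring

lemma Y_vac_neg_one_sub (a : V) (k : ℕ) :
    W.Y a (-1 - k) univ W.vac = ((k.factorial : ℂ)⁻¹) • (W.T ^ k) a := by
  induction k with
  | zero => simpa using W.vac_id a
  | succ k ih =>
    have h := W.transT a (-1 - k) univ W.vac
    rw [W.T_vac, map_zero, sub_zero, ih, map_smul, ← Module.End.mul_apply, ← pow_succ',
      show (-1 - k : ℤ) - 1 = -1 - (k + 1 : ℕ) by push_cast; ring] at h
    rw [← Int.cast_smul_eq_zsmul ℂ] at h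
    have hk : ((k + 1 : ℕ) : ℂ)⁻¹ * ((-(-1 - k : ℤ) : ℤ) : ℂ) = 1 := by
      rw [show ((-(-1 - k : ℤ) : ℤ) : ℂ) = ((k + 1 : ℕ) : ℂ) by push_cast; ring]
      exact inv_mul_cancel₀ (Nat.cast_ne_zero.2 k.succ_ne_zero)
    rw [Nat.factorial_succ, Nat.cast_mul, mul_inv, mul_smul, h, smul_smul, hk, one_smul]

def LocalOfOrder (pa pb : ℕ) (a b : V) (n : ℕ) : Prop :=
  ∀ (j j' : ℤ) (J J' : Finset (Fin N)) (c : V),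
    (∑ r ∈ range (n + 1), ((-1 : ℤ)^r * (n.choose r : ℤ)) •
      (W.Y a (j + ((n : ℤ) - r)) J (W.Y b (j' + r) J' c)
        - ((-1 : ℤ)^((pa + N + J.card) * (pb + N + J'.card))) •
          W.Y b (j' + r) J' (W.Y a (j + ((n : ℤ) - r)) J c))) = 0

variable {W}

lemma LocalOfOrder.succ {pa pb : ℕ} {a b : V} {n : ℕ} (h : W.LocalOfOrder pa pb a b n) :
    W.LocalOfOrder pa pb a b (n + 1) := fun j j' J J' c =>
  (sum_neg_one_pow_mul_choose_smul_succ (fun u v => W.Y a u J (W.Y b v J' c)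
      - ((-1 : ℤ)^((pa + N + J.card) * (pb + N + J'.card))) • W.Y b v J' (W.Y a u J c))
    n j j').trans (by rw [h, h, sub_zero])

lemma LocalOfOrder.mono {pa pb : ℕ} {a b : V} {n m : ℕ} (h : W.LocalOfOrder pa pb a b n)
    (hnm : n ≤ m) : W.LocalOfOrder pa pb a b m := by
  induction m, hnm using Nat.le_induction with
  | base => exact h
  | succ m _ ih => exact ih.succ

lemma Y_neg_one_sub_eq_sum_of_localOfOrder {pa pb : ℕ} {a b : V} {n : ℕ}
    (h : W.LocalOfOrder pb pa b a n) :
    W.Y a (-1) univ b - ((-1 : ℤ)^(pa * pb)) • W.Y b (-1) univ a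
      = ∑ k ∈ range n, ((-1 : ℤ)^k * (n.choose (k + 1) : ℤ)) •
          W.Y a k univ (((k + 1).factorial : ℂ)⁻¹ • (W.T ^ (k + 1)) b) := by
  have hsign : (-1 : ℤ)^((pb + N + (univ : Finset (Fin N)).card)
      * (pa + N + (univ : Finset (Fin N)).card)) = (-1) ^ (pa * pb) := by
    rw [card_univ, Fintype.card_fin,
      show (pb + N + N) * (pa + N + N) = pa * pb + 2 * (N * (pa + pb + 2 * N)) by ring,
      pow_add, (even_two_mul _).neg_one_pow, mul_one]
  have H := h (-1 - n) (-1) univ univ W.vac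
  rw [hsign, sum_range_succ'] at H
  have hterm : ∀ k ∈ range n, ((-1 : ℤ)^(k + 1) * (n.choose (k + 1) : ℤ)) •
      (W.Y b (-1 - n + (n - (k + 1 : ℕ))) univ (W.Y a (-1 + (k + 1 : ℕ)) univ W.vac)
        - ((-1 : ℤ)^(pa * pb)) • W.Y a (-1 + (k + 1 : ℕ)) univ
            (W.Y b (-1 - n + (n - (k + 1 : ℕ))) univ W.vac))
      = ((-1 : ℤ)^(pa * pb)) • ((-1 : ℤ)^k * (n.choose (k + 1) : ℤ)) •
          W.Y a k univ (((k + 1).factorial : ℂ)⁻¹ • (W.T ^ (k + 1)) b) := by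
    intro k _
    rw [show (-1 : ℤ) + (k + 1 : ℕ) = k by push_cast; ring,
      show -1 - (n : ℤ) + (n - (k + 1 : ℕ)) = -1 - (k + 1 : ℕ) by ring,
      W.vac_pos a k _ k.cast_nonneg, map_zero, zero_sub, W.Y_vac_neg_one_sub, smul_neg,
      smul_comm, pow_succ]
    module
  rw [sum_congr rfl hterm, ← smul_sum] at H
  simp only [pow_zero, Nat.choose_zero_right, Nat.cast_one, mul_one, one_smul, Nat.cast_zero,
    add_zero, sub_zero, sub_add_cancel, W.vac_id] at H
  rcases neg_one_pow_eq_or ℤ (pa * pb) with hs | hs <;> rw [hs] at H ⊢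
  · linear_combination (norm := module) -H
  · linear_combination (norm := module) H

end NWVertex

/-- In an `N_W = N` SUSY vertex algebra, the normally ordered product
`:ab: = a_{(-1|N)}b` satisfies quasi-commutativity
`:ab: - (-1)^{p(a)p(b)} :ba: = ∫_{-∇}^0 [a_Λ b] dΛ`, where the right-hand side is the
definite integral of the `Λ`-bracket `[a_Λ b] = Σ (-1)^{JN} Λ^{(j|J)} a_{(j|J)}b`
(integrating the even variable `λ` and applying `∂` with respect to all the odd `χ^i`),
evaluated between `-∇ = (-T, -S^i)` and `0`; explicitly it equals
`Σ_{j≥0} ((-1)^j/(j+1)!) T^{j+1} (a_{(j|N)} b)`. -/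
theorem stmt13 {N : ℕ} {V : Type} [AddCommGroup V] [Module ℂ V] (W : NWVertex N V)
    (pa pb : ℕ) (a b : V) (ha : a ∈ W.grade pa) (hb : b ∈ W.grade pb) :
    W.Y a (-1) Finset.univ b - ((-1 : ℤ)^(pa * pb)) • W.Y b (-1) Finset.univ a
      = ∑ᶠ j : ℕ, ((-1 : ℂ)^j * (((j + 1).factorial : ℂ))⁻¹) •
          ((W.T ^ (j + 1)) (W.Y a (j : ℤ) Finset.univ b)) := by
  obtain ⟨nloc, hloc⟩ : ∃ n, W.LocalOfOrder pb pa b a n := W.locality pb pa b a hb ha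
  obtain ⟨nfield, hfield⟩ := W.field_cond a b Finset.univ
  set n := max nloc nfield.toNat
  have hsupport : (Function.support fun j : ℕ =>
      ((-1 : ℂ)^j * (((j + 1).factorial : ℂ))⁻¹) •
        ((W.T ^ (j + 1)) (W.Y a (j : ℤ) Finset.univ b))) ⊆ Finset.range n := by
    intro j hj
    by_contra hjn
    apply hj
    have hj_large : nfield ≤ j := by
      simp only [Finset.coe_range, Set.mem_Iio, not_lt] at hjn; omega
    simp only [hfield j hj_large, map_zero, smul_zero]
  rw [finsum_eq_sum_of_support_subset _ hsupport,
    NWVertex.Y_neg_one_sub_eq_sum_of_localOfOrder (hloc.mono (le_max_left _ _)),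
    W.alternating_sum_choose_succ_smul_Y_T_pow_succ]
end
end

section
/- In the N_K=N setting, D_W^{(j|J)} δ(Z,W) = σ(J) (i_{z,w} - i_{w,z}) (Z-W)^{-1-j|N∖J}, where D_W^{(j|J)} = ((-1)^{|J|(|J|+1)/2}/j!) ∂_w^j ∏_{i∈J}(∂_{ζ^i} + ζ^i∂_w), δ(Z,W) = (i_{z,w}-i_{w,z})((θ-ζ)^N/(z-w)), and (Z-W)^{-1-j|N∖J} uses the N_K binomial (z-w-Σθ^iζ^i) expanded in the respective domain. -/
/-!
Write `q = Σ_i θ^i ζ^i`. The distribution `(i_{z,w} - i_{w,z})(Z-W)^{m|S}` is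
`f(q) (θ-ζ)^S`, where `f(x)` is the expansion of `(z - w - x)^m`, a power series in `x` that
may be evaluated at `q` because `q^(N+1) = 0`. The delta function is the case `m = -1`,
`S = {1, …, N}`: only the constant term of `f` survives, since `q (θ-ζ)^N = 0`.
As `∂_w f = ∂_x f` and `∂_{ζ^i} q = -θ^i`, the super derivative `D^i_W` hits the even factor
only through `(θ^i - ζ^i) f'(q)`, which `(θ-ζ)^S` annihilates when `i ∈ S`. Hence `D^i_W`
just removes `θ^i - ζ^i` from `(θ-ζ)^S`, with the sign of moving it to the front; then
`∂_w^j (z - w - x)^{-1} = j! (z - w - x)^{-1-j}`, and the reordering signs multiply to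
`(-1)^{|J|(|J|+1)/2} σ(J)`.
-/

noncomputable section

namespace Stmt19

variable {N : ℕ}

/-- Formal distributions in the two supervariables `Z, W`. -/
abbrev Dist2 (N : ℕ) : Type := ℤ → ℤ → Gr 2 N

/-- The generalized binomial coefficient `m(m-1)⋯(m-r+1)/r!` for `m ∈ ℤ`. -/
def genChoose (m : ℤ) (r : ℕ) : ℂ :=
  (∏ t ∈ Finset.range r, ((m : ℂ) - t)) / (r.factorial : ℂ)

/-- Coefficient of `z^a w^b` in `i_{z,w}(z-w)^m` (expansion in `|z| > |w|`). -/
def izwC (m : ℤ) (a b : ℤ) : ℂ :=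
  if 0 ≤ b ∧ a + b = m then (-1 : ℂ)^(b.toNat) * genChoose m b.toNat else 0

/-- Coefficient of `z^a w^b` in `i_{w,z}(z-w)^m` (expansion in `|w| > |z|`). -/
def iwzC (m : ℤ) (a b : ℤ) : ℂ :=
  if 0 ≤ a ∧ a + b = m then genChoose m a.toNat * (-1 : ℂ)^(b : ℤ) else 0

/-- `Σ_i θ^i ζ^i`. -/
def qq (N : ℕ) : Gr 2 N := ∑ i : Fin N, gv 0 i * gv 1 i

/-- `(θ-ζ)^J`. -/
def tK (J : Finset (Fin N)) : Gr 2 N := oprod J (fun i => gv 0 i - gv 1 i)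

/-- `i_{z,w}(Z-W)^{j|J}` with the `N_K` binomial `(z-w-Σθ^iζ^i)^j (θ-ζ)^J`. -/
def izwNK (N : ℕ) (j : ℤ) (J : Finset (Fin N)) : Dist2 N :=
  fun a b => ∑ r ∈ Finset.range (N + 1),
    ((-1 : ℂ)^r * genChoose j r * izwC (j - r) a b) • ((qq N)^r * tK J)

/-- `i_{w,z}(Z-W)^{j|J}`. -/
def iwzNK (N : ℕ) (j : ℤ) (J : Finset (Fin N)) : Dist2 N :=
  fun a b => ∑ r ∈ Finset.range (N + 1),
    ((-1 : ℂ)^r * genChoose j r * iwzC (j - r) a b) • ((qq N)^r * tK J)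

/-- The formal super delta function
`δ(Z,W) = (i_{z,w}-i_{w,z})((θ-ζ)^N/(z-w))`. -/
def deltaDist (N : ℕ) : Dist2 N :=
  fun a b => if a + b = -1 then tK Finset.univ else 0

/-- The `N_K` super derivative `D^i_W = ∂_{ζ^i} + ζ^i ∂_w` on distributions. -/
def DW (i : Fin N) (d : Dist2 N) : Dist2 N :=
  fun a b => dgv 1 i (d a b) + gv 1 i * (((b : ℂ) + 1) • d a (b + 1))

/-- `∂_w` on distributions. -/
def dw (d : Dist2 N) : Dist2 N := fun a b => ((b : ℂ) + 1) • d a (b + 1)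

/-- The divided-power derivative
`D_W^{(j|J)} = ((-1)^{|J|(|J|+1)/2}/j!) ∂_w^j D^{j_1}_W ⋯ D^{j_k}_W`. -/
def DWdiv (j : ℕ) (J : Finset (Fin N)) (d : Dist2 N) : Dist2 N :=
  ((-1 : ℂ)^(J.card * (J.card + 1) / 2) * (j.factorial : ℂ)⁻¹) •
    (dw^[j] ((J.sort (· ≤ ·)).foldr DW d))

open Polynomial

theorem sum_pow_card_succ_eq_zero {ι A : Type*} [Semiring A] (f : ι → A)
    (hcomm : ∀ i j, Commute (f i) (f j)) (hsq : ∀ i, f i ^ 2 = 0) (T : Finset ι) :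
    (∑ k ∈ T, f k) ^ (T.card + 1) = 0 := by
  classical
  induction T using Finset.induction_on with
  | empty => simp
  | insert a T ha ih =>
    rw [Finset.sum_insert ha, Finset.card_insert_of_notMem ha]
    exact (Commute.sum_right _ _ _ fun k _ => hcomm a k)
      |>.add_pow_eq_zero_of_add_le_succ_of_pow_eq_zero (hsq a) ih (by omega)

section Leibniz

variable {R A : Type*} [CommSemiring R] [Semiring A] [Algebra R A]

theorem commute_aeval_of_commute {a q : A} (h : Commute a q) (p : R[X]) :
    Commute a (aeval q p) := by
  rw [aeval_eq_sum_range]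
  exact Commute.sum_right _ _ _ fun i _ => (h.pow_right i).smul_right _

theorem map_aeval_mul (D : A →ₗ[R] A) {q u : A} (hD : ∀ y, D (q * y) = u * y + q * D y)
    (hu : Commute u q) (p : R[X]) (y : A) :
    D (aeval q p * y) = u * (aeval q (derivative p) * y) + aeval q p * D y := by
  induction p using Polynomial.induction_on generalizing y with
  | C c => simp [Algebra.algebraMap_eq_smul_one]
  | add p p' hp hp' =>
    simp only [map_add, add_mul, mul_add, hp, hp']
    abel
  | monomial n c hp =>
    rw [pow_succ, ← mul_assoc]
    generalize C c * X ^ n = p at hp ⊢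
    rw [derivative_mul, derivative_X, mul_one, map_add, map_mul (aeval q), map_mul (aeval q),
      aeval_X, mul_assoc, hp, hD, mul_add, ← mul_assoc (aeval q p) u,
      ← (commute_aeval_of_commute hu p).eq]
    simp only [add_mul, mul_add, mul_assoc]
    abel

end Leibniz

section Truncation

variable {R A : Type*} [CommSemiring R] [Semiring A] [Algebra R A]

theorem aeval_trunc_add_of_pow_eq_zero {q : A} {n : ℕ} (hq : q ^ n = 0) (φ : PowerSeries R)
    (k : ℕ) : aeval q (PowerSeries.trunc (n + k) φ) = aeval q (PowerSeries.trunc n φ) := by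
  induction k with
  | zero => rfl
  | succ k ih =>
    rw [← add_assoc, PowerSeries.trunc_succ, map_add, ih, aeval_monomial, pow_add, hq, zero_mul,
      mul_zero, add_zero]

theorem aeval_mul_of_mul_eq_zero {q y : A} (h : q * y = 0) (p : R[X]) :
    aeval q p * y = p.coeff 0 • y := by
  conv_lhs => rw [← X_mul_divX_add p]
  rw [map_add, mul_comm X, map_mul, aeval_X, aeval_C, add_mul, mul_assoc, h, mul_zero, zero_add,
    Algebra.smul_def]

end Truncation

section Exterior

variable {R M : Type*} [CommRing R] [AddCommGroup M] [Module R M]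

theorem ι_mul_ι_anticomm (x y : M) :
    ExteriorAlgebra.ι R x * ExteriorAlgebra.ι R y =
      -(ExteriorAlgebra.ι R y * ExteriorAlgebra.ι R x) :=
  eq_neg_of_add_eq_zero_left (ExteriorAlgebra.ι_add_mul_swap x y)

theorem commute_ι_mul_ι (x y z : M) :
    Commute (ExteriorAlgebra.ι R x * ExteriorAlgebra.ι R y) (ExteriorAlgebra.ι R z) := by
  rw [Commute, SemiconjBy, mul_assoc, ι_mul_ι_anticomm y z, mul_neg, ← mul_assoc,
    ι_mul_ι_anticomm x z, neg_mul, neg_neg, mul_assoc]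

end Exterior

theorem gv_sub_gv (i : Fin N) :
    gv 0 i - gv 1 i =
      ExteriorAlgebra.ι ℂ (Pi.single (0, i) 1 - Pi.single (1, i) 1 : Fin 2 × Fin N → ℂ) :=
  (map_sub _ _ _).symm

theorem commute_qq_ι (m : Fin 2 × Fin N → ℂ) : Commute (qq N) (ExteriorAlgebra.ι ℂ m) :=
  Commute.sum_left _ _ _ fun _ _ => commute_ι_mul_ι _ _ _

theorem qq_pow_succ_eq_zero : qq N ^ (N + 1) = 0 := by
  have hcomm (i k : Fin N) : Commute (gv 0 i * gv 1 i : Gr 2 N) (gv 0 k * gv 1 k) :=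
    ((commute_ι_mul_ι _ _ _).mul_right (commute_ι_mul_ι _ _ _))
  have hsq (i : Fin N) : (gv 0 i * gv 1 i : Gr 2 N) ^ 2 = 0 := by
    rw [sq, mul_assoc, ← mul_assoc (gv 1 i), gv, gv, ι_mul_ι_anticomm (R := ℂ) (Pi.single (1, i) 1)]
    simp only [neg_mul, mul_neg, ← mul_assoc, ExteriorAlgebra.ι_sq_zero, zero_mul, neg_zero]
  simpa [qq] using sum_pow_card_succ_eq_zero _ hcomm hsq Finset.univ

theorem dgv_ι_mul (i : Fin N) (m : Fin 2 × Fin N → ℂ) (x : Gr 2 N) :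
    dgv 1 i (ExteriorAlgebra.ι ℂ m * x) = m (1, i) • x - ExteriorAlgebra.ι ℂ m * dgv 1 i x :=
  CliffordAlgebra.contractLeft_ι_mul _ _ _

theorem dgv_gv_mul (i : Fin N) (g : Fin 2) (k : Fin N) (x : Gr 2 N) :
    dgv 1 i (gv g k * x) = (if g = 1 ∧ k = i then x else 0) - gv g k * dgv 1 i x := by
  rw [gv, dgv_ι_mul]
  by_cases h : g = 1 ∧ k = i
  · obtain ⟨rfl, rfl⟩ := h
    simp
  · simp [h, Prod.ext_iff]

theorem dgv_qq_mul (i : Fin N) (y : Gr 2 N) :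
    dgv 1 i (qq N * y) = -gv 0 i * y + qq N * dgv 1 i y := by
  have hterm (k : Fin N) : dgv 1 i (gv 0 k * gv 1 k * y)
      = (if k = i then -gv 0 i * y else 0) + gv 0 k * gv 1 k * dgv 1 i y := by
    rw [mul_assoc, dgv_gv_mul, dgv_gv_mul, if_neg (by simp), mul_assoc]
    by_cases h : k = i
    · subst h
      simp only [and_self, if_true, mul_sub, neg_mul]
      abel
    · simp [h]
  simp only [qq, Finset.sum_mul, map_sum, hterm, Finset.sum_add_distrib, Finset.sum_ite_eq',
    Finset.mem_univ, if_true]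

theorem tK_insert {a : Fin N} {S : Finset (Fin N)} (ha : ∀ x ∈ S, a < x) :
    tK (insert a S) = (gv 0 a - gv 1 a) * tK S := by
  rw [tK, oprod, Finset.sort_insert _ (fun x hx => (ha x hx).le) (fun h => lt_irrefl a (ha a h)),
    List.map_cons, List.prod_cons]
  rfl

theorem sub_mul_tK_of_mem {i : Fin N} {S : Finset (Fin N)} (hi : i ∈ S) :
    (gv 0 i - gv 1 i) * tK S = 0 := by
  induction S using Finset.induction_on_min with
  | empty => simp at hi
  | insert a S ha ih =>
    rw [tK_insert ha, ← mul_assoc]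
    rcases eq_or_ne i a with rfl | hne
    · rw [gv_sub_gv, ExteriorAlgebra.ι_sq_zero, zero_mul]
    · rw [gv_sub_gv, gv_sub_gv, ι_mul_ι_anticomm, neg_mul, mul_assoc, ← gv_sub_gv, ← gv_sub_gv,
        ih (by simpa [hne] using hi), mul_zero, neg_zero]

theorem dgv_tK (i : Fin N) (S : Finset (Fin N)) :
    dgv 1 i (tK S) =
      if i ∈ S then (-(-1 : ℂ) ^ (S.filter (· < i)).card) • tK (S.erase i) else 0 := by
  induction S using Finset.induction_on_min with
  | empty =>
    rw [if_neg (Finset.notMem_empty i), tK, oprod, Finset.sort_empty, List.map_nil, List.prod_nil]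
    exact CliffordAlgebra.contractLeft_one _ _
  | insert a S ha ih =>
    have haS : a ∉ S := fun h => lt_irrefl a (ha a h)
    rw [tK_insert ha, gv_sub_gv, dgv_ι_mul, ← gv_sub_gv, ih]
    rcases eq_or_ne a i with rfl | hne
    · have hS : S.filter (· < a) = ∅ := Finset.filter_eq_empty_iff.mpr fun x hx => (ha x hx).asymm
      simp [haS, hS, Finset.filter_insert]
    · by_cases hiS : i ∈ S
      · have hai : a < i := ha i hiS
        rw [Finset.erase_insert_of_ne hne, tK_insert fun x hx => ha x (Finset.mem_of_mem_erase hx),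
          Finset.filter_insert, if_pos hai, Finset.card_insert_of_notMem (by simp [haS])]
        simp [hiS, hne.symm, pow_succ]
      · simp [hiS, hne.symm]

theorem qq_mul_tK_univ : qq N * tK Finset.univ = 0 := by
  rw [qq, Finset.sum_mul]
  refine Finset.sum_eq_zero fun k _ => ?_
  have hζ : gv 1 k * tK Finset.univ = gv 0 k * tK Finset.univ :=
    (sub_eq_zero.mp (by rw [← sub_mul]; exact sub_mul_tK_of_mem (Finset.mem_univ k))).symm
  rw [mul_assoc, hζ, ← mul_assoc, gv, ExteriorAlgebra.ι_sq_zero, zero_mul]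

/-- Substitution `x ↦ Σ_i θ^i ζ^i` into a power series; truncating at degree `N` loses nothing
because `(Σ_i θ^i ζ^i)^(N+1) = 0`. -/
def evalQ (N : ℕ) : PowerSeries ℂ →ₗ[ℂ] Gr 2 N :=
  (aeval (qq N)).toLinearMap ∘ₗ PowerSeries.trunc (N + 1)

theorem evalQ_apply (φ : PowerSeries ℂ) : evalQ N φ = aeval (qq N) (PowerSeries.trunc (N + 1) φ) :=
  rfl

theorem commute_evalQ_ι (φ : PowerSeries ℂ) (m : Fin 2 × Fin N → ℂ) :
    Commute (evalQ N φ) (ExteriorAlgebra.ι ℂ m) :=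
  (commute_aeval_of_commute (commute_qq_ι m).symm _).symm

theorem dgv_evalQ_mul (i : Fin N) (φ : PowerSeries ℂ) (y : Gr 2 N) :
    dgv 1 i (evalQ N φ * y) =
      -gv 0 i * (evalQ N (PowerSeries.derivative ℂ φ) * y) + evalQ N φ * dgv 1 i y := by
  have hu : Commute (-gv 0 i) (qq N) := (commute_qq_ι _).symm.neg_left
  rw [evalQ_apply, ← aeval_trunc_add_of_pow_eq_zero qq_pow_succ_eq_zero φ 1,
    map_aeval_mul (dgv 1 i) (dgv_qq_mul i) hu, ← PowerSeries.trunc_derivative]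
  rfl

theorem evalQ_mul_tK_univ (φ : PowerSeries ℂ) :
    evalQ N φ * tK Finset.univ = PowerSeries.coeff 0 φ • tK Finset.univ := by
  rw [evalQ_apply, aeval_mul_of_mul_eq_zero qq_mul_tK_univ, PowerSeries.coeff_trunc,
    if_pos N.succ_pos]

theorem succ_mul_genChoose_succ (m : ℤ) (r : ℕ) :
    ((r : ℂ) + 1) * genChoose m (r + 1) = ((m : ℂ) - r) * genChoose m r := by
  have hr : (r.factorial : ℂ) ≠ 0 := Nat.cast_ne_zero.mpr r.factorial_ne_zero
  rw [genChoose, genChoose, Finset.prod_range_succ, Nat.factorial_succ]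
  push_cast
  field_simp

theorem sub_mul_genChoose (m : ℤ) (r : ℕ) :
    ((m : ℂ) - r) * genChoose m r = m * genChoose (m - 1) r := by
  have hprod : (∏ t ∈ Finset.range r, ((m : ℂ) - t)) * ((m : ℂ) - r)
      = m * ∏ t ∈ Finset.range r, (((m - 1 : ℤ) : ℂ) - t) := by
    rw [← Finset.prod_range_succ, Finset.prod_range_succ', mul_comm]
    push_cast
    congr 1
    · ring
    · exact Finset.prod_congr rfl fun t _ => by ring
  rw [genChoose, genChoose, ← mul_div_assoc, ← mul_div_assoc, mul_comm _ (∏ t ∈ _, _), hprod]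

theorem genChoose_neg_one (r : ℕ) : genChoose (-1) r = (-1) ^ r := by
  have hprod : ∏ t ∈ Finset.range r, (((-1 : ℤ) : ℂ) - t) = (-1) ^ r * r.factorial := by
    induction r with
    | zero => simp
    | succ n ih =>
      rw [Finset.prod_range_succ, ih, Nat.factorial_succ, pow_succ]
      push_cast
      ring
  rw [genChoose, hprod, mul_div_assoc, div_self (Nat.cast_ne_zero.mpr r.factorial_ne_zero), mul_one]

/-- `∂_w (z-w)^m = -m (z-w)^(m-1)`, read off at the coefficient of `z^a w^b`. -/
theorem succ_mul_izwC_succ (m a b : ℤ) :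
    ((b : ℂ) + 1) * izwC m a (b + 1) = -(m : ℂ) * izwC (m - 1) a b := by
  unfold izwC
  by_cases hb : 0 ≤ b ∧ a + b = m - 1
  · obtain ⟨b, rfl⟩ := Int.eq_ofNat_of_zero_le hb.1
    rw [if_pos (by omega), if_pos hb, show ((b : ℤ) + 1).toNat = b + 1 by omega, Int.toNat_natCast,
      pow_succ]
    push_cast
    linear_combination (-(-1 : ℂ) ^ b) * (succ_mul_genChoose_succ m b + sub_mul_genChoose m b)
  · rw [if_neg hb, mul_zero]
    split_ifs with h
    · have : b = -1 := by omega
      subst this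
      norm_num
    · rw [mul_zero]

theorem succ_mul_iwzC_succ (m a b : ℤ) :
    ((b : ℂ) + 1) * iwzC m a (b + 1) = -(m : ℂ) * iwzC (m - 1) a b := by
  unfold iwzC
  by_cases ha : 0 ≤ a ∧ a + b = m - 1
  · obtain ⟨a, rfl⟩ := Int.eq_ofNat_of_zero_le ha.1
    have hb : (b : ℂ) + 1 = m - a := by
      rw [show b = m - 1 - a by omega]
      push_cast
      ring
    rw [if_pos (by omega), if_pos ha, Int.toNat_natCast, zpow_add_one₀ (by norm_num), hb]
    linear_combination (-(-1 : ℂ) ^ b) * sub_mul_genChoose m a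
  · rw [if_neg (by omega), if_neg ha, mul_zero, mul_zero]

theorem izwC_sub_iwzC_neg_one (a b : ℤ) :
    izwC (-1) a b - iwzC (-1) a b = if a + b = -1 then 1 else 0 := by
  unfold izwC iwzC
  by_cases hab : a + b = -1
  · by_cases hb : 0 ≤ b
    · obtain ⟨b, rfl⟩ := Int.eq_ofNat_of_zero_le hb
      rw [if_pos ⟨hb, hab⟩, if_neg (by omega), if_pos hab, Int.toNat_natCast, genChoose_neg_one,
        ← mul_pow]
      norm_num
    · obtain ⟨a, rfl⟩ := Int.eq_ofNat_of_zero_le (show 0 ≤ a by omega)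
      rw [if_neg (by omega), if_pos ⟨by omega, hab⟩, if_pos hab, Int.toNat_natCast,
        genChoose_neg_one, show b = -((a + 1 : ℕ) : ℤ) by omega, zpow_neg, zpow_natCast, ← inv_pow,
        inv_neg, inv_one, ← pow_add, show a + (a + 1) = 2 * a + 1 by ring, pow_succ, pow_mul]
      norm_num
  · rw [if_neg (by omega), if_neg (by omega), if_neg hab, sub_zero]

/-- The coefficient of `z^a w^b` in `(i_{z,w} - i_{w,z})(z - w - x)^m`, as a power series in `x`. -/
def binomSeries (m a b : ℤ) : PowerSeries ℂ :=
  PowerSeries.mk fun r => (-1) ^ r * genChoose m r * (izwC (m - r) a b - iwzC (m - r) a b)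

theorem succ_mul_izwC_sub_iwzC_succ (k a b : ℤ) :
    ((b : ℂ) + 1) * (izwC k a (b + 1) - iwzC k a (b + 1)) =
      -(k : ℂ) * (izwC (k - 1) a b - iwzC (k - 1) a b) := by
  linear_combination succ_mul_izwC_succ k a b - succ_mul_iwzC_succ k a b

theorem smul_binomSeries_succ (m a b : ℤ) :
    ((b : ℂ) + 1) • binomSeries m a (b + 1) = (-(m : ℂ)) • binomSeries (m - 1) a b := by
  ext r
  have h := succ_mul_izwC_sub_iwzC_succ (m - r) a b
  rw [show m - r - 1 = m - 1 - r by ring] at h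
  push_cast at h
  simp only [binomSeries, PowerSeries.coeff_smul, PowerSeries.coeff_mk, smul_eq_mul]
  linear_combination ((-1 : ℂ) ^ r * genChoose m r) * h
    - ((-1 : ℂ) ^ r * (izwC (m - 1 - r) a b - iwzC (m - 1 - r) a b)) * sub_mul_genChoose m r

theorem smul_binomSeries_succ_eq_derivative (m a b : ℤ) :
    ((b : ℂ) + 1) • binomSeries m a (b + 1) = PowerSeries.derivative ℂ (binomSeries m a b) := by
  ext r
  have h := succ_mul_izwC_sub_iwzC_succ (m - r) a b
  rw [sub_sub] at h
  simp only [binomSeries, PowerSeries.coeff_smul, PowerSeries.coeff_derivative,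
    PowerSeries.coeff_mk, smul_eq_mul, pow_succ]
  push_cast at h ⊢
  linear_combination ((-1 : ℂ) ^ r * genChoose m r) * h
    + ((-1 : ℂ) ^ r * (izwC (m - (r + 1)) a b - iwzC (m - (r + 1)) a b))
      * succ_mul_genChoose_succ m r

/-- `(i_{z,w} - i_{w,z})(Z-W)^{m|S}`, i.e. `binomSeries` at `x = Σ_i θ^i ζ^i`, times `(θ-ζ)^S`. -/
def superBinom (m : ℤ) (S : Finset (Fin N)) : Dist2 N :=
  fun a b => evalQ N (binomSeries m a b) * tK S

theorem izwNK_sub_iwzNK (m : ℤ) (S : Finset (Fin N)) (a b : ℤ) :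
    izwNK N m S a b - iwzNK N m S a b = superBinom m S a b := by
  rw [izwNK, iwzNK, ← Finset.sum_sub_distrib, superBinom, evalQ_apply, aeval_def,
    PowerSeries.eval₂_trunc_eq_sum_range, Finset.sum_mul]
  refine Finset.sum_congr rfl fun r _ => ?_
  rw [← sub_smul, binomSeries, PowerSeries.coeff_mk, mul_assoc, ← Algebra.smul_def, smul_mul_assoc]
  congr 1
  ring

theorem deltaDist_eq : deltaDist N = superBinom (-1) Finset.univ := by
  funext a b
  rw [superBinom, evalQ_mul_tK_univ, binomSeries, PowerSeries.coeff_mk]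
  simp only [pow_zero, genChoose, Finset.range_zero, Finset.prod_empty, Nat.factorial_zero,
    Nat.cast_one, div_one, one_mul, Nat.cast_zero, sub_zero, izwC_sub_iwzC_neg_one, deltaDist]
  split_ifs <;> simp

theorem dw_smul (c : ℂ) (f : Dist2 N) : dw (c • f) = c • dw f := by
  funext a b
  exact smul_comm ((b : ℂ) + 1) c (f a (b + 1))

theorem dw_iterate_smul (j : ℕ) (c : ℂ) (f : Dist2 N) : dw^[j] (c • f) = c • dw^[j] f := by
  induction j with
  | zero => rfl
  | succ j ih => rw [Function.iterate_succ_apply', ih, dw_smul, ← Function.iterate_succ_apply' dw]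

theorem dw_superBinom (m : ℤ) (S : Finset (Fin N)) :
    dw (superBinom m S) = (-(m : ℂ)) • superBinom (m - 1) S := by
  funext a b
  simp only [dw, superBinom, Pi.smul_apply, ← smul_mul_assoc, ← map_smul, smul_binomSeries_succ]

theorem dw_iterate_superBinom_neg_one (j : ℕ) (S : Finset (Fin N)) :
    dw^[j] (superBinom (-1) S) = (j.factorial : ℂ) • superBinom (-1 - j) S := by
  induction j with
  | zero => simp
  | succ j ih =>
    rw [Function.iterate_succ_apply', ih, dw_smul, dw_superBinom, smul_smul,
      show (-1 - j : ℤ) - 1 = -1 - (j + 1 : ℕ) by push_cast; ring, Nat.factorial_succ]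
    congr 1
    push_cast
    ring

theorem DW_smul (i : Fin N) (c : ℂ) (f : Dist2 N) : DW i (c • f) = c • DW i f := by
  funext a b
  simp only [DW, Pi.smul_apply, map_smul, smul_add, smul_comm ((b : ℂ) + 1) c, mul_smul_comm]

/-- On the even factor `f(z - w - Σθζ)`, `∂_{ζ^i}` gives `θ^i f'` and `ζ^i ∂_w` gives `-ζ^i f'`;
the sum `(θ^i - ζ^i) f'` is killed by `(θ-ζ)^S`, so only `∂_{ζ^i}(θ-ζ)^S` survives. -/
theorem DW_superBinom {i : Fin N} {S : Finset (Fin N)} (hi : i ∈ S) (m : ℤ) :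
    DW i (superBinom m S) = (-(-1 : ℂ) ^ (S.filter (· < i)).card) • superBinom m (S.erase i) := by
  funext a b
  have hw : ((b : ℂ) + 1) • superBinom m S a (b + 1) =
      evalQ N (PowerSeries.derivative ℂ (binomSeries m a b)) * tK S := by
    rw [superBinom, ← smul_mul_assoc, ← map_smul, smul_binomSeries_succ_eq_derivative]
  have hθζ (ψ : PowerSeries ℂ) : gv 0 i * (evalQ N ψ * tK S) = gv 1 i * (evalQ N ψ * tK S) := by
    rw [← sub_eq_zero, ← sub_mul, gv_sub_gv, ← mul_assoc, ← (commute_evalQ_ι ψ _).eq, mul_assoc,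
      ← gv_sub_gv, sub_mul_tK_of_mem hi, mul_zero]
  change dgv 1 i (superBinom m S a b) + gv 1 i * (((b : ℂ) + 1) • superBinom m S a (b + 1)) = _
  rw [hw, superBinom, dgv_evalQ_mul, dgv_tK, if_pos hi, neg_mul, hθζ, Pi.smul_apply,
    mul_smul_comm]
  abel

theorem filter_compl_lt_eq_Iio {a : Fin N} {J : Finset (Fin N)} (ha : ∀ x ∈ J, a ≤ x) :
    Jᶜ.filter (· < a) = Finset.Iio a := by
  ext y
  simp only [Finset.mem_filter, Finset.mem_compl, Finset.mem_Iio, and_iff_right_iff_imp]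
  exact fun hy hyJ => (ha y hyJ).not_gt hy

theorem card_inversions_eq_sum (I K : Finset (Fin N)) :
    ((I ×ˢ K).filter (fun p => p.2 < p.1)).card = ∑ x ∈ I, (K.filter (· < x)).card := by
  rw [Finset.card_filter, Finset.sum_product]
  exact Finset.sum_congr rfl fun x _ => (Finset.card_filter _ _).symm

theorem sgn_insert_compl {a : Fin N} {J : Finset (Fin N)} (ha : ∀ x ∈ J, a < x) :
    (sgn (insert a J) (insert a J)ᶜ : ℂ) = (-1) ^ ((a : ℕ) + J.card) * sgn J Jᶜ := by
  have haJ : a ∉ J := fun h => lt_irrefl a (ha a h)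
  have hstep (x : Fin N) (hx : x ∈ J) :
      (Jᶜ.filter (· < x)).card = ((insert a J)ᶜ.filter (· < x)).card + 1 := by
    rw [Finset.compl_insert, Finset.filter_erase,
      Finset.card_erase_add_one (by simp [haJ, ha x hx])]
  have hmin : ∀ x ∈ insert a J, a ≤ x := fun x hx =>
    (Finset.mem_insert.mp hx).elim (fun h => h.ge) (fun h => (ha x h).le)
  have hcount : a + J.card + ((J ×ˢ Jᶜ).filter (fun p => p.2 < p.1)).card =
      ((insert a J ×ˢ (insert a J)ᶜ).filter (fun p => p.2 < p.1)).card + 2 * J.card := by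
    rw [card_inversions_eq_sum, card_inversions_eq_sum, Finset.sum_insert haJ,
      filter_compl_lt_eq_Iio hmin, Fin.card_Iio, Finset.sum_congr rfl hstep, Finset.sum_add_distrib,
      Finset.card_eq_sum_ones J]
    ring
  simp only [sgn, if_pos disjoint_compl_right]
  push_cast
  rw [← pow_add, hcount, pow_add, pow_mul]
  norm_num

theorem foldr_DW_deltaDist (J : Finset (Fin N)) :
    (J.sort (· ≤ ·)).foldr DW (deltaDist N) =
      ((-1 : ℂ) ^ (J.card * (J.card + 1) / 2) * sgn J Jᶜ) • superBinom (-1) Jᶜ := by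
  induction J using Finset.induction_on_min with
  | empty => simp [deltaDist_eq, sgn]
  | insert a J ha ih =>
    have haJ : a ∉ J := fun h => lt_irrefl a (ha a h)
    have htri : (J.card + 1) * (J.card + 1 + 1) / 2 = J.card * (J.card + 1) / 2 + (J.card + 1) := by
      rw [show (J.card + 1) * (J.card + 1 + 1) = J.card * (J.card + 1) + (J.card + 1) * 2 by ring,
        Nat.add_mul_div_right _ _ two_pos]
    have hsq : ((-1 : ℂ) ^ J.card) * (-1) ^ J.card = 1 := by rw [← mul_pow]; norm_num
    rw [Finset.sort_insert _ (fun x hx => (ha x hx).le) haJ, List.foldr_cons, ih, DW_smul,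
      DW_superBinom (Finset.mem_compl.mpr haJ), filter_compl_lt_eq_Iio fun x hx => (ha x hx).le,
      Fin.card_Iio, ← Finset.compl_insert, smul_smul, sgn_insert_compl ha,
      Finset.card_insert_of_notMem haJ, htri]
    congr 1
    simp only [pow_add, pow_one]
    linear_combination ((-1 : ℂ) ^ (J.card * (J.card + 1) / 2) * (-1) ^ (a : ℕ) * sgn J Jᶜ) * hsq

/-- In the `N_K = N` setting,
`D_W^{(j|J)} δ(Z,W) = σ(J) (i_{z,w} - i_{w,z}) (Z-W)^{-1-j|N∖J}`. -/
theorem stmt19 (N : ℕ) (j : ℕ) (J : Finset (Fin N)) :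
    DWdiv j J (deltaDist N)
      = ((sgn J Jᶜ : ℂ)) •
          (fun a b => izwNK N (-1 - (j : ℤ)) Jᶜ a b - iwzNK N (-1 - (j : ℤ)) Jᶜ a b) := by
  have hdiff : (fun a b => izwNK N (-1 - (j : ℤ)) Jᶜ a b - iwzNK N (-1 - (j : ℤ)) Jᶜ a b) =
      superBinom (-1 - j) Jᶜ :=
    funext₂ (izwNK_sub_iwzNK _ _)
  have hsq : ((-1 : ℂ) ^ (J.card * (J.card + 1) / 2)) ^ 2 = 1 := by
    rw [← pow_mul, pow_mul', neg_one_sq, one_pow]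
  have hfac : (j.factorial : ℂ) ≠ 0 := Nat.cast_ne_zero.mpr j.factorial_ne_zero
  rw [DWdiv, foldr_DW_deltaDist, dw_iterate_smul, dw_iterate_superBinom_neg_one, hdiff, smul_smul,
    smul_smul]
  congr 1
  field_simp
  linear_combination (sgn J Jᶜ : ℂ) * hsq

end Stmt19
end
end
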